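/- Let n, k be positive integers with n ≥ k+2 ≥ 4. Suppose there exist integers l', l'' with 1 ≤ l' < l'' < k and l' + l'' ≠ k, and primes p' > k and p'' > k, such that ord_{p'}(n−l') = 1 and ord_{p''}(n−l'') = 1 (each prime divides the corresponding term exactly to the first power). Then F_{n,k}(x) is irreducible over ℚ. -/

import Mathlib

open Polynomial

/-- `c n k j = (−1)^{k−j} C(n,j) C(n−j−1, k−j)`, the `j`-th coefficient of `P_{n,k}(x−1)`. -/
def c (n k j : ℕ) : ℤ :=
  (-1) ^ (k - j) * (n.choose j : ℤ) * ((n - j - 1).choose (k - j) : ℤ)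

/-- `F n k a = ∑_{j=0}^{k} a_j c_j x^j` as a polynomial over `ℚ`. -/
noncomputable def F (n k : ℕ) (a : ℕ → ℤ) : Polynomial ℚ :=
  ∑ j ∈ Finset.range (k + 1), Polynomial.C ((a j * c n k j : ℤ) : ℚ) * Polynomial.X ^ j

/-!
Fix a prime `p > k` with `ord_p (n - l) = 1`. Among `n, n - 1, …, n - k` only `n - l` is
divisible by `p`, and only once; since `(n - j) · j! (k - j)! · |c_j| = n (n - 1) ⋯ (n - k)`,
the coefficient `a_j c_j` has `p`-adic valuation `0` for `j = l` and `1` otherwise. Reducing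
modulo `p`, a factorization `F = g h` over `ℤ` becomes a factorization of a monomial of degree
`l`, and the valuations of the constant and leading coefficients then force `deg g` or `deg h`
to be `0` or `l`. Applied to `(p', l')` and `(p'', l'')`, a proper factor would have degree in
`{l', k - l'}` and in `{l'', k - l''}`, which are disjoint because `l' < l''` and
`l' + l'' ≠ k`; Gauss's lemma passes from `ℤ` to `ℚ`.
-/

namespace Polynomial

variable {R : Type*} [CommRing R] [IsDomain R]

theorem natTrailingDegree_eq_natDegree_of_mul_eq_monomial {g h : R[X]} {l : ℕ} {a : R}
    (ha : a ≠ 0) (hgh : g * h = monomial l a) :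
    g.natTrailingDegree = g.natDegree ∧ h.natTrailingDegree = h.natDegree ∧
      g.natDegree + h.natDegree = l := by
  have hgh0 : g * h ≠ 0 := by rw [hgh]; exact (monomial_eq_zero_iff a l).not.mpr ha
  have hg : g ≠ 0 := left_ne_zero_of_mul hgh0
  have hh : h ≠ 0 := right_ne_zero_of_mul hgh0
  have hdeg := natDegree_mul hg hh
  have htrail := natTrailingDegree_mul hg hh
  rw [hgh, natDegree_monomial_eq l ha] at hdeg
  rw [hgh, natTrailingDegree_monomial ha] at htrail
  have := g.natTrailingDegree_le_natDegree
  have := h.natTrailingDegree_le_natDegree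
  omega

theorem natDegree_factor_of_coeff_mem_of_ne {P : Ideal R} [P.IsPrime] {f g h : R[X]} {l : ℕ}
    (hfgh : f = g * h) (hP : ∀ j ≠ l, f.coeff j ∈ P) (hl : f.coeff l ∉ P)
    (h0 : f.coeff 0 ∉ P ^ 2) (hlead : f.leadingCoeff ∉ P ^ 2) :
    g.natDegree = 0 ∨ h.natDegree = 0 ∨ g.natDegree = l ∨ h.natDegree = l := by
  set φ := Ideal.Quotient.mk P
  have hmod : g.map φ * h.map φ = monomial l (φ (f.coeff l)) := by
    ext j
    rw [← Polynomial.map_mul, ← hfgh, coeff_map, coeff_monomial]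
    split_ifs with hj
    · rw [hj]
    · exact Ideal.Quotient.eq_zero_iff_mem.mpr (hP j (Ne.symm hj))
  obtain ⟨hg, hh, hsum⟩ := natTrailingDegree_eq_natDegree_of_mul_eq_monomial
    (mt Ideal.Quotient.eq_zero_iff_mem.mp hl) hmod
  have coeff_zero_mem {q : R[X]} (hq : (q.map φ).natTrailingDegree = (q.map φ).natDegree)
      (hpos : 0 < (q.map φ).natDegree) : q.coeff 0 ∈ P := by
    rw [← Ideal.Quotient.eq_zero_iff_mem, ← coeff_map]
    exact coeff_eq_zero_of_lt_natTrailingDegree (hq ▸ hpos)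
  have hconst : (g.map φ).natDegree = 0 ∨ (h.map φ).natDegree = 0 := by
    by_contra! hpos
    refine h0 ?_
    rw [hfgh, mul_coeff_zero, sq]
    exact Ideal.mul_mem_mul (coeff_zero_mem hg (Nat.pos_of_ne_zero hpos.1))
      (coeff_zero_mem hh (Nat.pos_of_ne_zero hpos.2))
  have hkeep : (g.map φ).natDegree = g.natDegree ∨ (h.map φ).natDegree = h.natDegree := by
    by_contra! hdrop
    refine hlead ?_
    rw [hfgh, leadingCoeff_mul, sq]
    exact Ideal.mul_mem_mul
      (by_contra fun hg' => hdrop.1 (natDegree_map_of_leadingCoeff_ne_zero φ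
        (mt Ideal.Quotient.eq_zero_iff_mem.mp hg')))
      (by_contra fun hh' => hdrop.2 (natDegree_map_of_leadingCoeff_ne_zero φ
        (mt Ideal.Quotient.eq_zero_iff_mem.mp hh')))
  omega

variable [NormalizedGCDMonoid R] {K : Type*} [Field K] [Algebra R K] [IsFractionRing R K]

theorem irreducible_map_of_forall_mul_eq {f : R[X]} (hf : 0 < f.natDegree)
    (H : ∀ g h : R[X], f = g * h → g.natDegree = 0 ∨ h.natDegree = 0) :
    Irreducible (f.map (algebraMap R K)) := by
  have hcontent : f.content ≠ 0 := content_eq_zero_iff.not.mpr (ne_zero_of_natDegree_gt hf)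
  have isUnit_of_natDegree_eq_zero {g h : R[X]} (hgh : f.primPart = g * h)
      (hg : g.natDegree = 0) : IsUnit g := by
    rw [eq_C_of_natDegree_eq_zero hg]
    exact isUnit_C.mpr (isPrimitive_iff_isUnit_of_C_dvd.mp f.isPrimitive_primPart _
      ⟨h, by rw [hgh, ← eq_C_of_natDegree_eq_zero hg]⟩)
  have hprim : Irreducible f.primPart := by
    refine ⟨not_isUnit_of_natDegree_pos _ (f.natDegree_primPart ▸ hf), fun g h hgh => ?_⟩
    have hf' : f = (C f.content * g) * h := by
      rw [mul_assoc, ← hgh, ← eq_C_content_mul_primPart]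
    rcases H _ _ hf' with hg | hh
    · exact .inl (isUnit_of_natDegree_eq_zero hgh (natDegree_C_mul hcontent ▸ hg))
    · exact .inr (isUnit_of_natDegree_eq_zero (hgh.trans (mul_comm g h)) hh)
  have hassoc : Associated ((f.primPart).map (algebraMap R K)) (f.map (algebraMap R K)) := by
    conv_rhs => rw [eq_C_content_mul_primPart f, Polynomial.map_mul, map_C]
    exact (associated_isUnit_mul_right_iff (isUnit_C.mpr (IsUnit.mk0 _
      ((map_ne_zero_iff _ (IsFractionRing.injective R K)).mpr hcontent)))).mpr (.refl _)
  exact hassoc.irreducible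
    ((f.isPrimitive_primPart.irreducible_iff_irreducible_map_fraction_map).mp hprim)

end Polynomial

theorem natAbs_c (n k j : ℕ) : (c n k j).natAbs = n.choose j * (n - j - 1).choose (k - j) := by
  simp [c, Int.natAbs_mul, Int.natAbs_pow]

theorem choose_mul_choose_ne_zero {n k j : ℕ} (hkn : k < n) (hj : j ≤ k) :
    n.choose j * (n - j - 1).choose (k - j) ≠ 0 :=
  mul_ne_zero (Nat.choose_pos (by omega)).ne' (Nat.choose_pos (by omega)).ne'

theorem c_ne_zero {n k j : ℕ} (hkn : k < n) (hj : j ≤ k) : c n k j ≠ 0 :=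
  Int.natAbs_ne_zero.mp (natAbs_c n k j ▸ choose_mul_choose_ne_zero hkn hj)

theorem descFactorial_succ_eq_mul_choose_mul_choose {n k j : ℕ} (hjk : j ≤ k) :
    n.descFactorial (k + 1) = (n - j) * (j.factorial * (k - j).factorial) *
      (n.choose j * (n - j - 1).choose (k - j)) := by
  rw [← Nat.descFactorial_mul_descFactorial (Nat.succ_le_succ hjk), Nat.descFactorial_succ,
    Nat.descFactorial_eq_factorial_mul_choose, Nat.descFactorial_eq_factorial_mul_choose]
  simp only [Nat.succ_eq_add_one]
  rw [Nat.add_sub_add_right, Nat.sub_add_eq]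
  ring

theorem padicValNat_factorial_eq_zero {p i : ℕ} [Fact p.Prime] (hip : i < p) :
    padicValNat p i.factorial = 0 :=
  padicValNat.eq_zero_of_not_dvd fun h => by
    have := (Nat.Prime.dvd_factorial Fact.out).mp h
    omega

section
variable {p n k l : ℕ} (hpk : k < p) (hkn : k < n) (hl : l ≤ k)
  (hord : padicValNat p (n - l) = 1)
include hpk hkn hl hord

theorem padicValNat_sub_eq_ite {i : ℕ} (hi : i ≤ k) :
    padicValNat p (n - i) = if i = l then 1 else 0 := by
  split_ifs with hil
  · rwa [hil]
  refine padicValNat.eq_zero_of_not_dvd fun hdvd => hil ?_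
  have hdiff : (p : ℤ) ∣ (l : ℤ) - i := by
    have := Int.dvd_sub (Int.natCast_dvd_natCast.mpr hdvd)
      (Int.natCast_dvd_natCast.mpr (dvd_of_one_le_padicValNat hord.ge))
    push_cast [Nat.cast_sub (by omega : i ≤ n), Nat.cast_sub (by omega : l ≤ n)] at this
    convert this using 1; ring
  have := Int.eq_zero_of_abs_lt_dvd hdiff (abs_lt.mpr ⟨by omega, by omega⟩)
  omega

theorem padicValNat_descFactorial_eq_ite [Fact p.Prime] {m : ℕ} (hm : m ≤ k + 1) :
    padicValNat p (n.descFactorial m) = if l < m then 1 else 0 := by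
  induction m with
  | zero => simp
  | succ m ih =>
    rw [Nat.descFactorial_succ, padicValNat.mul (by omega)
      (Nat.descFactorial_eq_zero_iff_lt.not.mpr (by omega)),
      padicValNat_sub_eq_ite hpk hkn hl hord (by omega), ih (by omega)]
    split_ifs <;> omega

theorem padicValInt_c [Fact p.Prime] {j : ℕ} (hj : j ≤ k) :
    padicValInt p (c n k j) = if j = l then 0 else 1 := by
  have hv := padicValNat_descFactorial_eq_ite hpk hkn hl hord le_rfl
  rw [if_pos (by omega), descFactorial_succ_eq_mul_choose_mul_choose hj,
    padicValNat.mul (mul_ne_zero (by omega) (by positivity)) (choose_mul_choose_ne_zero hkn hj),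
    padicValNat.mul (by omega) (by positivity), padicValNat.mul (by positivity) (by positivity),
    padicValNat_sub_eq_ite hpk hkn hl hord hj, padicValNat_factorial_eq_zero (by omega),
    padicValNat_factorial_eq_zero (by omega : k - j < p)] at hv
  rw [padicValInt, natAbs_c]
  split_ifs at hv ⊢ <;> omega

end

noncomputable def FInt (n k : ℕ) (a : ℕ → ℤ) : ℤ[X] :=
  ∑ j ∈ Finset.range (k + 1), C (a j * c n k j) * X ^ j

section FInt
variable {n k : ℕ} {a : ℕ → ℤ}

theorem map_FInt : (FInt n k a).map (algebraMap ℤ ℚ) = F n k a := by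
  simp [FInt, F, Polynomial.map_sum]

theorem coeff_FInt (j : ℕ) : (FInt n k a).coeff j = if j ≤ k then a j * c n k j else 0 := by
  simp only [FInt, finsetSum_coeff, coeff_C_mul_X_pow, Finset.sum_ite_eq, Finset.mem_range,
    Nat.lt_succ_iff]

theorem natDegree_FInt (hkn : k ≤ n) (hak : a k ≠ 0) : (FInt n k a).natDegree = k := by
  refine natDegree_eq_of_le_of_coeff_ne_zero ?_ ?_
  · exact natDegree_le_iff_coeff_eq_zero.mpr fun j hj => by
      rw [coeff_FInt, if_neg (by exact_mod_cast hj.not_ge)]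
  · rw [coeff_FInt, if_pos le_rfl]
    simpa [c, hak] using (Nat.choose_pos hkn).ne'

variable {p l : ℕ} [Fact p.Prime] (hpk : k < p) (hkn : k < n) (hl : l ≤ k)
  (hord : padicValNat p (n - l) = 1) (ha : ∀ j ≤ k, a j ≠ 0 ∧ ¬ (p : ℤ) ∣ a j)
include hpk hkn hl hord ha

theorem pow_dvd_coeff_FInt_iff {j : ℕ} (hj : j ≤ k) (e : ℕ) :
    (p : ℤ) ^ e ∣ (FInt n k a).coeff j ↔ e ≤ if j = l then 0 else 1 := by
  have hc := c_ne_zero hkn hj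
  rw [coeff_FInt, if_pos hj, padicValInt_dvd_iff, padicValInt.mul (ha j hj).1 hc,
    padicValInt.eq_zero_of_not_dvd (ha j hj).2, padicValInt_c hpk hkn hl hord hj]
  simp [(ha j hj).1, hc]

theorem natDegree_factor_FInt {g h : ℤ[X]} (hgh : FInt n k a = g * h) :
    g.natDegree = 0 ∨ h.natDegree = 0 ∨ g.natDegree = l ∨ h.natDegree = l := by
  have : (Ideal.span {(p : ℤ)}).IsPrime :=
    (Ideal.span_singleton_prime (by exact_mod_cast (Fact.out : p.Prime).ne_zero)).mpr
      (Nat.prime_iff_prime_int.mp Fact.out)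
  have hdvd {j : ℕ} (hj : j ≤ k) (e : ℕ) := pow_dvd_coeff_FInt_iff hpk hkn hl hord ha hj e
  refine natDegree_factor_of_coeff_mem_of_ne (P := Ideal.span {(p : ℤ)}) hgh
    (fun j hj => ?_) ?_ ?_ ?_ <;> simp only [Ideal.span_singleton_pow, Ideal.mem_span_singleton]
  · by_cases hjk : j ≤ k
    · simpa [hj] using (hdvd hjk 1).mpr
    · simp [coeff_FInt, hjk]
  · simpa using hdvd hl 1
  · rw [hdvd (Nat.zero_le k)]
    split_ifs <;> omega
  · rw [leadingCoeff, natDegree_FInt hkn.le (ha k le_rfl).1, hdvd le_rfl]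
    split_ifs <;> omega

end FInt

theorem F_irreducible_of_two_terms_general (n k : ℕ) (hn : n ≥ k + 2)
    (l' l'' : ℕ) (hl'l'' : l' < l'') (hl''k : l'' < k) (hsum : l' + l'' ≠ k)
    (p' p'' : ℕ) (hp' : p'.Prime) (hp'' : p''.Prime) (hp'k : k < p') (hp''k : k < p'')
    (hordl' : padicValNat p' (n - l') = 1) (hordl'' : padicValNat p'' (n - l'') = 1)
    (a : ℕ → ℤ) (ha : ∀ j ≤ k, a j ≠ 0 ∧ ∀ q : ℕ, q.Prime → (q : ℤ) ∣ a j → q ≤ k) :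
    Irreducible (F n k a) := by
  have hfree {p : ℕ} (hp : p.Prime) (hpk : k < p) (j : ℕ) (hj : j ≤ k) :
      a j ≠ 0 ∧ ¬ (p : ℤ) ∣ a j :=
    ⟨(ha j hj).1, fun hd => absurd ((ha j hj).2 p hp hd) (by omega)⟩
  have hdeg := natDegree_FInt (by omega : k ≤ n) (ha k le_rfl).1
  rw [← map_FInt]
  refine irreducible_map_of_forall_mul_eq (by omega) fun g h hgh => ?_
  have : Fact p'.Prime := ⟨hp'⟩
  have : Fact p''.Prime := ⟨hp''⟩
  have h' := natDegree_factor_FInt hp'k (by omega) (by omega) hordl' (hfree hp' hp'k) hgh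
  have h'' := natDegree_factor_FInt hp''k (by omega) (by omega) hordl'' (hfree hp'' hp''k) hgh
  have hgh0 : g * h ≠ 0 := hgh ▸ ne_zero_of_natDegree_gt (hdeg ▸ (by omega : 0 < k))
  have hsum' := natDegree_mul (left_ne_zero_of_mul hgh0) (right_ne_zero_of_mul hgh0)
  rw [← hgh, hdeg] at hsum'
  omega

theorem F_irreducible_of_two_terms (n k : ℕ) (hk : k + 2 ≥ 4) (hn : n ≥ k + 2)
    (l' l'' : ℕ) (hl' : 1 ≤ l') (hl'l'' : l' < l'') (hl''k : l'' < k) (hsum : l' + l'' ≠ k)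
    (p' p'' : ℕ) (hp' : p'.Prime) (hp'' : p''.Prime) (hp'k : k < p') (hp''k : k < p'')
    (hordl' : padicValNat p' (n - l') = 1) (hordl'' : padicValNat p'' (n - l'') = 1)
    (a : ℕ → ℤ) (ha : ∀ j ≤ k, a j ≠ 0 ∧ ∀ q : ℕ, q.Prime → (q : ℤ) ∣ a j → q ≤ k) :
    Irreducible (F n k a) :=
  F_irreducible_of_two_terms_general n k hn l' l'' hl'l'' hl''k hsum p' p'' hp' hp'' hp'k hp''k
    hordl' hordl'' a ha
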